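/- arXiv:1410.4538 — 4 statements merged into one kernel-verified Lean document; each statement's English description precedes it below -/
import Mathlib

section
/- Let χ₁ be a primitive Dirichlet character modulo q₁, and let m, n, δ, c be positive integers with gcd(mδ, q₁) = 1 and gcd(q₁, δc) = 1. Then S_{χ₁}(m, nq₁², q₁δc) = conj(χ₁(m)) · χ₁(δc) · τ(χ₁) · S(m, n, δc). -/
open scoped BigOperators

/-- `e(x) = exp(2πix)`. -/
noncomputable def e2 (x : ℝ) : ℂ := Complex.exp (2 * Real.pi * Complex.I * x)

/-- The Kloosterman sum `S(m,n,c)`. -/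
noncomputable def klSum (m n : ℤ) (c : ℕ) : ℂ :=
  ∑ d ∈ (Finset.range c).filter (fun d => Nat.Coprime d c),
    e2 (((m * d + n * (((d : ZMod c)⁻¹).val : ℤ) : ℤ) : ℝ) / c)

/-- The twisted Kloosterman sum `S_χ(m,n,c)` for a Dirichlet character `χ` mod `q₁`. -/
noncomputable def klSumTwist {q₁ : ℕ} (χ : DirichletCharacter ℂ q₁) (m n : ℤ) (c : ℕ) : ℂ :=
  ∑ d ∈ (Finset.range c).filter (fun d => Nat.Coprime d c),
    χ (d : ZMod q₁) * e2 (((m * d + n * (((d : ZMod c)⁻¹).val : ℤ) : ℤ) : ℝ) / c)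

/-- The Gauss sum `τ(χ) = Σ_{a mod q₁} χ(a) e(a/q₁)`. -/
noncomputable def gaussS {q₁ : ℕ} (χ : DirichletCharacter ℂ q₁) : ℂ :=
  ∑ a ∈ Finset.range q₁, χ (a : ZMod q₁) * e2 ((a : ℝ) / q₁)

/-!
Write `C = δc`. By the Chinese remainder theorem the units `d` modulo `q₁C` correspond to pairs
`(a, b)` of units modulo `q₁` and modulo `C`, and `e(x / q₁C) = e(C̄x / q₁) e(q̄₁x / C)`, where
`CC̄ ≡ 1 (mod q₁)` and `q₁q̄₁ ≡ 1 (mod C)`. Since `q₁ ∣ nq₁²`, the summand factors and the sum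
becomes `(Σ_a χ(a) e(C̄ma / q₁)) · (Σ_b e(q̄₁(mb + nq₁²b̄) / C))`. The first factor is a shifted
Gauss sum, `χ̄(C̄m) τ(χ) = χ̄(m) χ(C) τ(χ)`; the substitution `b ↦ q₁b` turns the second one into
`S(m, n, C)`.
-/

open Finset ZMod

lemma e2_intCast_div (N : ℕ) [NeZero N] (j : ℤ) :
    e2 ((j : ℝ) / N) = stdAddChar (j : ZMod N) := by
  rw [stdAddChar_coe, e2]
  push_cast
  ring_nf

lemma e2_kloosterman_phase (N : ℕ) [NeZero N] (m n : ℤ) (d : ℕ) :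
    e2 (((m * d + n * (((d : ZMod N)⁻¹).val : ℤ) : ℤ) : ℝ) / N) =
      stdAddChar ((m : ZMod N) * (d : ZMod N) + (n : ZMod N) * (d : ZMod N)⁻¹) := by
  rw [e2_intCast_div]
  push_cast
  rw [natCast_zmod_val]

lemma sum_filter_coprime_eq_sum_units {M : Type*} [AddCommMonoid M] (N : ℕ) [NeZero N]
    (f : ZMod N → M) :
    ∑ d ∈ (range N).filter (fun d => d.Coprime N), f d = ∑ u : (ZMod N)ˣ, f u := by
  refine sum_bij' (fun d hd => unitOfCoprime d (mem_filter.mp hd).2) (fun u _ => (u : ZMod N).val)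
    (fun _ _ => mem_univ _) (fun u _ => ?_) (fun d hd => ?_) (fun u _ => ?_) (fun d _ => rfl)
  · exact mem_filter.mpr ⟨mem_range.mpr (val_lt _), val_coe_unit_coprime u⟩
  · exact val_cast_of_lt (mem_range.mp (mem_filter.mp hd).1)
  · ext
    simp

lemma sum_range_eq_sum_zmod {M : Type*} [AddCommMonoid M] (N : ℕ) [NeZero N] (f : ZMod N → M) :
    ∑ d ∈ range N, f d = ∑ x : ZMod N, f x :=
  sum_nbij' (↑) val (fun _ _ => mem_univ _) (fun x _ => mem_range.mpr (val_lt x))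
    (fun _ hd => val_cast_of_lt (mem_range.mp hd)) (fun x _ => natCast_zmod_val x) (fun _ _ => rfl)

lemma klSum_eq_sum_units (m n : ℤ) (N : ℕ) [NeZero N] :
    klSum m n N = ∑ u : (ZMod N)ˣ,
      stdAddChar ((m : ZMod N) * (u : ZMod N) + (n : ZMod N) * (↑u⁻¹ : ZMod N)) := by
  simp only [klSum, e2_kloosterman_phase]
  rw [sum_filter_coprime_eq_sum_units N
    fun x => stdAddChar ((m : ZMod N) * x + (n : ZMod N) * x⁻¹)]
  simp only [inv_coe_unit]

lemma klSumTwist_eq_sum_units {q N : ℕ} [NeZero N] (hqN : q ∣ N) (χ : DirichletCharacter ℂ q)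
    (m n : ℤ) :
    klSumTwist χ m n N = ∑ u : (ZMod N)ˣ,
      χ (cast (u : ZMod N)) *
        stdAddChar ((m : ZMod N) * (u : ZMod N) + (n : ZMod N) * (↑u⁻¹ : ZMod N)) := by
  simp only [klSumTwist, e2_kloosterman_phase, ← cast_natCast hqN]
  rw [sum_filter_coprime_eq_sum_units N
    fun x => χ (cast x) * stdAddChar ((m : ZMod N) * x + (n : ZMod N) * x⁻¹)]
  simp only [inv_coe_unit]

lemma gaussS_eq_gaussSum {q : ℕ} [NeZero q] (χ : DirichletCharacter ℂ q) :
    gaussS χ = gaussSum χ stdAddChar := by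
  simp only [gaussS, gaussSum, ← sum_range_eq_sum_zmod q fun x => χ x * stdAddChar x]
  congr! 2 with a
  simpa using e2_intCast_div q a

lemma MulChar.sum_units_mul_eq_sum {R M : Type*} [CommRing R] [Fintype R] [DecidableEq R]
    [CommRing M] (χ : MulChar R M) (f : R → M) : ∑ a : Rˣ, χ a * f a = ∑ a, χ a * f a := by
  refine sum_of_injOn (↑) Units.val_injective.injOn (fun _ _ => mem_univ _) ?_ (fun _ _ => rfl)
  intro a _ ha
  rw [χ.map_nonunit fun hu => ha ⟨hu.unit, mem_univ _, hu.unit_spec⟩, zero_mul]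

lemma MulChar.inv_apply_units_inv_mul {R : Type*} [CommRing R] [Finite Rˣ] (χ : MulChar R ℂ)
    (s : Rˣ) (a : R) : χ⁻¹ (↑s⁻¹ * a) = χ s * starRingEnd ℂ (χ a) := by
  rw [map_mul, inv_apply, Ring.inverse_unit, inv_inv, ← star_apply']
  rfl

lemma stdAddChar_mul_eq {q C : ℕ} [NeZero q] [NeZero C] (h : q.Coprime C) (x : ZMod (q * C)) :
    stdAddChar x =
      stdAddChar ((C : ZMod q)⁻¹ * cast x) * stdAddChar ((q : ZMod C)⁻¹ * cast x) := by
  obtain ⟨k, rfl⟩ := intCast_surjective x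
  have hbezout : (q * q.gcdA C + C * q.gcdB C : ℤ) = 1 := by
    exact_mod_cast (h.gcd_eq_one ▸ Nat.gcd_eq_gcd_ab q C).symm
  have hB : (C : ZMod q)⁻¹ = q.gcdB C := ZMod.inv_eq_of_mul_eq_one _ _ _ <| by
    simpa using congrArg (Int.cast : ℤ → ZMod q) hbezout
  have hA : (q : ZMod C)⁻¹ = q.gcdA C := ZMod.inv_eq_of_mul_eq_one _ _ _ <| by
    simpa using congrArg (Int.cast : ℤ → ZMod C) hbezout
  rw [cast_intCast (dvd_mul_right q C), cast_intCast (dvd_mul_left C q), hA, hB,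
    ← Int.cast_mul, ← Int.cast_mul, stdAddChar_coe, stdAddChar_coe, stdAddChar_coe,
    ← Complex.exp_add]
  congr 1
  have hq : (q : ℂ) ≠ 0 := NeZero.ne _
  have hC : (C : ℂ) ≠ 0 := NeZero.ne _
  have hbezoutC : (q : ℂ) * q.gcdA C + C * q.gcdB C = 1 := by exact_mod_cast hbezout
  field_simp
  push_cast
  linear_combination (-(k * q * C : ℂ)) * hbezoutC

lemma sum_units_eq_sum_units_prod {M : Type*} [AddCommMonoid M] {q C : ℕ} [NeZero q] [NeZero C]
    (h : q.Coprime C) (G : (ZMod q)ˣ → (ZMod C)ˣ → M) :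
    ∑ u : (ZMod (q * C))ˣ,
      G (Units.map (castHom (dvd_mul_right q C) (ZMod q) : ZMod (q * C) →* ZMod q) u)
        (Units.map (castHom (dvd_mul_left C q) (ZMod C) : ZMod (q * C) →* ZMod C) u) =
      ∑ a, ∑ b, G a b := by
  rw [← Fintype.sum_prod_type']
  refine Fintype.sum_equiv
    ((Units.mapEquiv (chineseRemainder h).toMulEquiv).trans MulEquiv.prodUnits) _ _ fun u => ?_
  have hcrt : (chineseRemainder h : ZMod (q * C) →+* ZMod q × ZMod C) =
      (castHom (dvd_mul_right q C) (ZMod q)).prod (castHom (dvd_mul_left C q) (ZMod C)) :=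
    Subsingleton.elim _ _
  congr 1 <;> ext
  · exact (congrArg Prod.fst (RingHom.congr_fun hcrt u)).symm
  · exact (congrArg Prod.snd (RingHom.congr_fun hcrt u)).symm

lemma sum_units_mul_stdAddChar_mul {q : ℕ} [NeZero q] (χ : DirichletCharacter ℂ q) {g : ZMod q}
    (hg : IsUnit g) :
    ∑ a : (ZMod q)ˣ, χ a * stdAddChar (g * (a : ZMod q)) = χ⁻¹ g * gaussSum χ stdAddChar := by
  rw [MulChar.sum_units_mul_eq_sum χ fun a => stdAddChar (g * a), ← hg.unit_spec,
    ← gaussSum_mulShift_eq]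
  rfl

lemma sum_units_stdAddChar_inv_mul {C : ℕ} [NeZero C] (t : (ZMod C)ˣ) (m n : ZMod C) :
    ∑ b : (ZMod C)ˣ,
        stdAddChar ((↑t⁻¹ : ZMod C) * (m * (b : ZMod C) + n * (t : ZMod C) ^ 2 * (↑b⁻¹ : ZMod C))) =
      ∑ w : (ZMod C)ˣ, stdAddChar (m * (w : ZMod C) + n * (↑w⁻¹ : ZMod C)) := by
  refine Fintype.sum_equiv (Equiv.mulLeft t⁻¹) _ _ fun b => congrArg stdAddChar ?_
  simp only [Equiv.coe_mulLeft, mul_inv_rev, inv_inv, Units.val_mul]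
  linear_combination (n * t * (↑b⁻¹ : ZMod C)) * Units.inv_mul t

theorem klSumTwist_mul_sq_eq {q C : ℕ} [NeZero q] [NeZero C] (h : q.Coprime C)
    (χ : DirichletCharacter ℂ q) {m : ℤ} (hm : IsUnit (m : ZMod q)) (n : ℤ) :
    klSumTwist χ m (n * q ^ 2) (q * C) =
      starRingEnd ℂ (χ m) * χ C * gaussS χ * klSum m n C := by
  set πq := Units.map (castHom (dvd_mul_right q C) (ZMod q) : ZMod (q * C) →* ZMod q)
  set πC := Units.map (castHom (dvd_mul_left C q) (ZMod C) : ZMod (q * C) →* ZMod C)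
  set s := unitOfCoprime C h.symm
  set t := unitOfCoprime q h
  set F : (ZMod q)ˣ → ℂ := fun a =>
    χ a * stdAddChar ((↑s⁻¹ : ZMod q) * (m : ZMod q) * (a : ZMod q))
  set G : (ZMod C)ˣ → ℂ := fun b =>
    stdAddChar ((↑t⁻¹ : ZMod C) *
      ((m : ZMod C) * (b : ZMod C) + (n : ZMod C) * (t : ZMod C) ^ 2 * (↑b⁻¹ : ZMod C)))
  have hsplit (u : (ZMod (q * C))ˣ) : χ (cast (u : ZMod (q * C))) *
      stdAddChar ((m : ZMod (q * C)) * (u : ZMod (q * C)) + ((n * q ^ 2 : ℤ) : ZMod (q * C)) *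
        (↑u⁻¹ : ZMod (q * C))) = F (πq u) * G (πC u) := by
    have hs : (↑s⁻¹ : ZMod q) = (C : ZMod q)⁻¹ := by rw [← inv_coe_unit, coe_unitOfCoprime]
    have ht : (↑t⁻¹ : ZMod C) = (q : ZMod C)⁻¹ := by rw [← inv_coe_unit, coe_unitOfCoprime]
    have ht' : (t : ZMod C) = q := coe_unitOfCoprime q h
    rw [stdAddChar_mul_eq h]
    simp only [F, G, ← map_inv, πq, πC, hs, ht, ht', Units.coe_map, MonoidHom.coe_coe,
      castHom_apply, cast_add (dvd_mul_right q C), cast_mul (dvd_mul_right q C),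
      cast_intCast (dvd_mul_right q C), cast_add (dvd_mul_left C q), cast_mul (dvd_mul_left C q),
      cast_intCast (dvd_mul_left C q)]
    push_cast
    simp only [natCast_self]
    ring_nf
  calc klSumTwist χ m (n * q ^ 2) (q * C) = ∑ u, F (πq u) * G (πC u) := by
        rw [klSumTwist_eq_sum_units (dvd_mul_right q C)]
        exact sum_congr rfl fun u _ => hsplit u
    _ = (∑ a, F a) * ∑ b, G b := by
        rw [sum_mul_sum]
        exact sum_units_eq_sum_units_prod h fun a b => F a * G b
    _ = _ := by
        simp only [F, G]
        rw [sum_units_mul_stdAddChar_mul χ ((Units.isUnit _).mul hm), sum_units_stdAddChar_inv_mul,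
          ← klSum_eq_sum_units, gaussS_eq_gaussSum, MulChar.inv_apply_units_inv_mul,
          coe_unitOfCoprime]
        ring

theorem twisted_multiplicativity_kloosterman_general
    (q₁ : ℕ) (χ₁ : DirichletCharacter ℂ q₁)
    (m n δ c : ℕ)
    (hco : Nat.Coprime (m * δ) q₁) (hco' : Nat.Coprime q₁ (δ * c)) :
    klSumTwist χ₁ (m : ℤ) ((n : ℤ) * (q₁ : ℤ) ^ 2) (q₁ * (δ * c)) =
      (starRingEnd ℂ) (χ₁ (m : ZMod q₁)) * χ₁ ((δ * c : ℕ) : ZMod q₁) * gaussS χ₁ *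
        klSum (m : ℤ) (n : ℤ) (δ * c) := by
  rcases eq_or_ne q₁ 0 with rfl | hq
  · simp [klSumTwist, gaussS]
  rcases eq_or_ne (δ * c) 0 with hC | hC
  · simp [klSumTwist, klSum, hC]
  have : NeZero q₁ := ⟨hq⟩
  have : NeZero (δ * c) := ⟨hC⟩
  have hm : IsUnit ((m : ℤ) : ZMod q₁) := by
    simpa using (isUnit_iff_coprime m q₁).mpr (Nat.Coprime.coprime_mul_right hco)
  simpa using klSumTwist_mul_sq_eq hco' χ₁ hm n

/-- Twisted multiplicativity:
`S_{χ₁}(m, nq₁², q₁δc) = conj(χ₁(m)) χ₁(δc) τ(χ₁) S(m,n,δc)` for `(mδ, q₁) = 1` and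
`(q₁, δc) = 1`. -/
theorem twisted_multiplicativity_kloosterman
    (q₁ : ℕ) (hq₁ : 0 < q₁) (χ₁ : DirichletCharacter ℂ q₁) (hχ₁ : χ₁.IsPrimitive)
    (m n δ c : ℕ) (hm : 0 < m) (hn : 0 < n) (hδ : 0 < δ) (hc : 0 < c)
    (hco : Nat.Coprime (m * δ) q₁) (hco' : Nat.Coprime q₁ (δ * c)) :
    klSumTwist χ₁ (m : ℤ) ((n : ℤ) * (q₁ : ℤ) ^ 2) (q₁ * (δ * c)) =
      (starRingEnd ℂ) (χ₁ (m : ZMod q₁)) * χ₁ ((δ * c : ℕ) : ZMod q₁) * gaussS χ₁ *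
        klSum (m : ℤ) (n : ℤ) (δ * c) :=
  twisted_multiplicativity_kloosterman_general q₁ χ₁ m n δ c hco hco'
end

section
/- Let w, C₁, C₂, n be positive integers with gcd(C₁, C₂w) = 1, and let ψ be a Dirichlet character modulo C₂w whose conductor divides w. Then Σ_{D mod C₁C₂w, gcd(D, C₁C₂w)=1} ψ(D) e(−nD/(C₁C₂w)) = r_{C₁}(n) · ψ(C₁) · Σ_{d mod C₂w, gcd(d, C₂w)=1} ψ(d) e(−nd/(C₂w)), where ψ(D) denotes ψ evaluated at D modulo C₂w. -/
open scoped BigOperators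

/-- The Ramanujan sum `r_C(n) = Σ_{d mod C, (d,C)=1} e(−nd/C)`. -/
noncomputable def ramanujanSum (C : ℕ) (n : ℤ) : ℂ :=
  ∑ d ∈ (Finset.range C).filter (fun d => Nat.Coprime d C),
    e2 (((-(n * d) : ℤ) : ℝ) / C)

/-!
By the Chinese remainder theorem, `D = a C₂w + d C₁` runs over the reduced residues mod `C₁C₂w`
as `a` and `d` run over the reduced residues mod `C₁` and mod `C₂w`. For such `D` one has
`ψ(D) = ψ(d) ψ(C₁)` and `e(−nD/(C₁C₂w)) = e(−na/C₁) e(−nd/(C₂w))`, so the sum factors.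
-/

open Finset

lemma e2_add (x y : ℝ) : e2 (x + y) = e2 x * e2 y := by
  simp only [e2, Complex.ofReal_add, mul_add, Complex.exp_add]

lemma e2_intCast (k : ℤ) : e2 k = 1 := by
  rw [e2, ← Complex.exp_int_mul_two_pi_mul_I k]
  push_cast
  ring_nf

lemma e2_intCast_mul_div_periodic (k : ℤ) (N : ℕ) :
    Function.Periodic (fun x : ℕ => e2 (k * x / N)) N := fun x => by
  rcases eq_or_ne N 0 with rfl | hN
  · simp
  · have : (k : ℝ) * ↑(x + N) / N = k * x / N + k := by
      push_cast; field_simp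
    simp only [this, e2_add, e2_intCast, mul_one]

namespace Nat

variable {m n : ℕ}

lemma coprime_mul_add_mul_left_iff (h : n.Coprime m) (a d : ℕ) :
    (a * n + d * m).Coprime m ↔ a.Coprime m := by
  rw [coprime_add_mul_right_left, coprime_mul_iff_left, and_iff_left h]

lemma eq_of_mul_add_mul_modEq (h : n.Coprime m) {a a' d d' : ℕ} (ha : a < m) (ha' : a' < m)
    (H : a * n + d * m ≡ a' * n + d' * m [MOD m]) : a = a' := by
  have : a * n ≡ a' * n [MOD m] := by simpa [ModEq, add_mul_mod_self_right] using H
  exact (this.cancel_right_of_coprime (coprime_comm.mp h)).eq_of_lt_of_lt ha ha'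

lemma card_filter_coprime_range (m : ℕ) : #{a ∈ range m | a.Coprime m} = φ m := by
  simp only [totient, coprime_comm]

theorem sum_filter_coprime_range_mul {β : Type*} [AddCommMonoid β] (h : m.Coprime n)
    {f : ℕ → β} (hf : Function.Periodic f (m * n)) :
    ∑ D ∈ (range (m * n)).filter (·.Coprime (m * n)), f D =
      ∑ a ∈ (range m).filter (·.Coprime m), ∑ d ∈ (range n).filter (·.Coprime n),
        f (a * n + d * m) := by
  rw [← sum_product']
  set s := (range m).filter (·.Coprime m) ×ˢ (range n).filter (·.Coprime n)
  set t := (range (m * n)).filter (·.Coprime (m * n))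
  set i : ℕ × ℕ → ℕ := fun p => (p.1 * n + p.2 * m) % (m * n)
  have hmaps : ∀ p ∈ s, i p ∈ t := by
    rintro ⟨a, d⟩ hp
    simp only [s, t, i, mem_product, mem_filter, mem_range] at hp ⊢
    obtain ⟨⟨ha, hac⟩, hd, hdc⟩ := hp
    refine ⟨mod_lt _ (Nat.mul_pos (by omega) (by omega)), ?_⟩
    rw [ZMod.coprime_mod_iff_coprime, coprime_mul_iff_right]
    refine ⟨(coprime_mul_add_mul_left_iff h.symm a d).2 hac, ?_⟩
    rw [add_comm]
    exact (coprime_mul_add_mul_left_iff h d a).2 hdc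
  have hinj : Set.InjOn i s := by
    rintro ⟨a, d⟩ hp ⟨a', d'⟩ hp' H
    simp only [s, mem_coe, mem_product, mem_filter, mem_range] at hp hp'
    have H' : a * n + d * m ≡ a' * n + d' * m [MOD m * n] := H
    have H'' : d * m + a * n ≡ d' * m + a' * n [MOD n] := by
      rw [add_comm, add_comm (d' * m)]
      exact H'.of_mul_left m
    exact Prod.ext (eq_of_mul_add_mul_modEq h.symm hp.1.1 hp'.1.1 (H'.of_mul_right n))
      (eq_of_mul_add_mul_modEq h hp.2.1 hp'.2.1 H'')
  have hcard : #t ≤ #s := by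
    rw [card_product, card_filter_coprime_range, card_filter_coprime_range,
      card_filter_coprime_range, totient_mul h]
  exact (sum_nbij i hmaps hinj (surjOn_of_injOn_of_card_le i hmaps hinj hcard)
    fun p _ => (hf.map_mod_nat _).symm).symm

end Nat

theorem twisted_sum_mul_eq_ramanujanSum_mul (C₁ M n : ℕ) (hco : C₁.Coprime M) (ψ : DirichletCharacter ℂ M) :
    (∑ D ∈ (Finset.range (C₁ * M)).filter (fun D => Nat.Coprime D (C₁ * M)),
      ψ (D : ZMod M) * e2 (((-(n * D : ℕ) : ℤ) : ℝ) / (C₁ * M : ℕ))) =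
    ramanujanSum C₁ (n : ℤ) * ψ ((C₁ : ℕ) : ZMod M) *
      ∑ d ∈ (Finset.range M).filter (fun d => Nat.Coprime d M),
        ψ (d : ZMod M) * e2 (((-(n * d : ℕ) : ℤ) : ℝ) / (M : ℕ)) := by
  have hψ : Function.Periodic (fun D : ℕ => ψ (D : ZMod M)) (C₁ * M) := fun D => by simp
  have he : Function.Periodic (fun D : ℕ => e2 (((-(n * D : ℕ) : ℤ) : ℝ) / (C₁ * M : ℕ)))
      (C₁ * M) := by
    simpa [neg_mul] using e2_intCast_mul_div_periodic (-n) (C₁ * M)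
  have hf : Function.Periodic
      (fun D : ℕ => ψ (D : ZMod M) * e2 (((-(n * D : ℕ) : ℤ) : ℝ) / (C₁ * M : ℕ))) (C₁ * M) :=
    hψ.mul he
  rw [Nat.sum_filter_coprime_range_mul hco hf, ramanujanSum, sum_mul, sum_mul]
  refine sum_congr rfl fun a ha => ?_
  rw [mul_sum]
  refine sum_congr rfl fun d hd => ?_
  have hC₁ : (C₁ : ℝ) ≠ 0 := Nat.cast_ne_zero.2 (ne_zero_of_lt (mem_range.1 (mem_filter.1 ha).1))
  have hM : (M : ℝ) ≠ 0 := Nat.cast_ne_zero.2 (ne_zero_of_lt (mem_range.1 (mem_filter.1 hd).1))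
  have hchar : ψ ((a * M + d * C₁ : ℕ) : ZMod M) = ψ d * ψ C₁ := by simp
  have hphase : e2 (((-(n * (a * M + d * C₁) : ℕ) : ℤ) : ℝ) / (C₁ * M : ℕ)) =
      e2 (((-(n * a) : ℤ) : ℝ) / C₁) * e2 (((-(n * d : ℕ) : ℤ) : ℝ) / (M : ℕ)) := by
    rw [← e2_add]
    congr 1
    push_cast
    field_simp
    ring
  simp only [hchar, hphase]
  ring

theorem twisted_sum_splitting_general
    (w C₁ C₂ n : ℕ)
    (hco : Nat.Coprime C₁ (C₂ * w))
    (ψ : DirichletCharacter ℂ (C₂ * w)) :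
    (∑ D ∈ (Finset.range (C₁ * (C₂ * w))).filter
        (fun D => Nat.Coprime D (C₁ * (C₂ * w))),
      ψ (D : ZMod (C₂ * w)) * e2 (((-(n * D : ℕ) : ℤ) : ℝ) / (C₁ * (C₂ * w) : ℕ))) =
    ramanujanSum C₁ (n : ℤ) * ψ ((C₁ : ℕ) : ZMod (C₂ * w)) *
      ∑ d ∈ (Finset.range (C₂ * w)).filter (fun d => Nat.Coprime d (C₂ * w)),
        ψ (d : ZMod (C₂ * w)) * e2 (((-(n * d : ℕ) : ℤ) : ℝ) / (C₂ * w : ℕ)) :=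
  twisted_sum_mul_eq_ramanujanSum_mul C₁ (C₂ * w) n hco ψ

/-- Splitting of a complete twisted exponential sum along the coprime factorization
`C₁ · C₂w`: for `ψ` mod `C₂w` of conductor dividing `w` and `(C₁, C₂w) = 1`,
`Σ_{D mod C₁C₂w, (D,C₁C₂w)=1} ψ(D) e(−nD/(C₁C₂w)) = r_{C₁}(n) ψ(C₁) Σ_{d mod C₂w, (d,C₂w)=1} ψ(d) e(−nd/(C₂w))`. -/
theorem twisted_sum_splitting
    (w C₁ C₂ n : ℕ) (hw : 0 < w) (hC₁ : 0 < C₁) (hC₂ : 0 < C₂) (hn : 0 < n)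
    (hco : Nat.Coprime C₁ (C₂ * w))
    (ψ : DirichletCharacter ℂ (C₂ * w)) (hcond : ψ.conductor ∣ w) :
    (∑ D ∈ (Finset.range (C₁ * (C₂ * w))).filter
        (fun D => Nat.Coprime D (C₁ * (C₂ * w))),
      ψ (D : ZMod (C₂ * w)) * e2 (((-(n * D : ℕ) : ℤ) : ℝ) / (C₁ * (C₂ * w) : ℕ))) =
    ramanujanSum C₁ (n : ℤ) * ψ ((C₁ : ℕ) : ZMod (C₂ * w)) *
      ∑ d ∈ (Finset.range (C₂ * w)).filter (fun d => Nat.Coprime d (C₂ * w)),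
        ψ (d : ZMod (C₂ * w)) * e2 (((-(n * d : ℕ) : ℤ) : ℝ) / (C₂ * w : ℕ)) :=
  twisted_sum_splitting_general w C₁ C₂ n hco ψ
end

section
/- Let Q and n be positive integers, let ψ be a Dirichlet character modulo Q, and let s ∈ ℂ with Re(s) > 1/2. Then Σ_{C ≥ 1, gcd(C,Q)=1} ψ(C) r_C(n) C^{-2s} = (Σ_{δ | n, gcd(δ,Q)=1} ψ(δ) δ^{1-2s}) · Π_{p prime, p ∤ Q} (1 − ψ(p) p^{-2s}), where the series on the left converges absolutely and the infinite product on the right converges. -/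
/-!
Möbius inversion of the condition `(d, C) = 1` turns `r_C(n)` into geometric sums over roots of
unity, which gives `r_C(n) = Σ_{m ∣ (C, n)} m μ(C/m)`: the sequence `C ↦ r_C(n)` is the Dirichlet
convolution of `m ↦ m · 1_{m ∣ n}` with `μ`. Twisting by the completely multiplicative `ψ` respects
convolution, so the series factors as the Dirichlet polynomial `Σ_{δ ∣ n} ψ(δ) δ^{1-2s}` times
`L(ψμ, 2s) = 1 / L(ψ, 2s)`, whose Euler product is `Π_p (1 - ψ(p) p^{-2s})`; the primes dividing
`Q` contribute factors `1` since `ψ(p) = 0` there.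
-/

open scoped BigOperators

open Finset ArithmeticFunction LSeries
open scoped ArithmeticFunction.Moebius

theorem IsPrimitiveRoot.geom_sum_zpow {K : Type*} [Field K] {ζ : K} {M : ℕ}
    (hζ : IsPrimitiveRoot ζ M) (a : ℤ) :
    ∑ t ∈ range M, (ζ ^ a) ^ t = if (M : ℤ) ∣ a then (M : K) else 0 := by
  split_ifs with h
  · simp [(hζ.zpow_eq_one_iff_dvd a).2 h]
  · rw [geom_sum_eq (mt (hζ.zpow_eq_one_iff_dvd a).1 h), ← zpow_natCast, ← zpow_mul, mul_comm,
      zpow_mul, zpow_natCast, hζ.pow_eq_one, one_zpow, sub_self, zero_div]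

theorem e2_intCast_div_s10 (k : ℤ) (M : ℕ) :
    e2 ((k : ℝ) / M) = Complex.exp (2 * Real.pi * Complex.I / M) ^ k := by
  rw [e2, ← Complex.exp_int_mul]
  congr 1
  push_cast
  ring

theorem sum_range_mul_filter_dvd {M : Type*} [AddCommMonoid M] {g : ℕ} (hg : 0 < g) (N : ℕ)
    (F : ℕ → M) : ∑ d ∈ range (g * N) with g ∣ d, F d = ∑ t ∈ range N, F (g * t) := by
  have : {d ∈ range (g * N) | g ∣ d} = (range N).image (g * ·) := by
    ext d
    simp only [mem_filter, mem_range, mem_image]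
    constructor
    · rintro ⟨hd, t, rfl⟩
      exact ⟨t, Nat.lt_of_mul_lt_mul_left hd, rfl⟩
    · rintro ⟨t, ht, rfl⟩
      exact ⟨Nat.mul_lt_mul_of_pos_left ht hg, dvd_mul_right g t⟩
  rw [this, sum_image fun _ _ _ _ h => Nat.eq_of_mul_eq_mul_left hg h]

theorem sum_divisors_moebius {R : Type*} [Ring R] (k : ℕ) :
    ∑ g ∈ k.divisors, (μ g : R) = if k = 1 then 1 else 0 := by
  have h := coe_mul_zeta_apply (f := (μ : ArithmeticFunction R)) (x := k)
  rw [coe_moebius_mul_coe_zeta, one_apply] at h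
  simpa using h.symm

theorem sum_filter_coprime_eq_sum_divisors_moebius {R : Type*} [Ring R] (s : Finset ℕ)
    {C : ℕ} (hC : C ≠ 0) (F : ℕ → R) :
    ∑ d ∈ s with d.Coprime C, F d = ∑ g ∈ C.divisors, (μ g : R) * ∑ d ∈ s with g ∣ d, F d := by
  have hind : ∀ d, ∑ g ∈ C.divisors with g ∣ d, (μ g : R) = if d.Coprime C then 1 else 0 := by
    intro d
    have : {g ∈ C.divisors | g ∣ d} = (C.gcd d).divisors := by
      rw [← Nat.divisors_filter_dvd_of_dvd hC (Nat.gcd_dvd_left C d)]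
      exact filter_congr fun g hg => (Nat.dvd_gcd_iff.trans
        (and_iff_right (Nat.dvd_of_mem_divisors hg))).symm
    simp [this, sum_divisors_moebius, Nat.Coprime, Nat.gcd_comm]
  simp_rw [sum_filter, mul_sum]
  rw [sum_comm]
  refine sum_congr rfl fun d _ => ?_
  rw [← one_mul (F d), ← ite_zero_mul, ← hind d, sum_filter, sum_mul]
  refine sum_congr rfl fun g _ => ?_
  split_ifs <;> simp

section

open scoped LSeries.notation

theorem ramanujanSum_eq_convolution (C : ℕ) (n : ℤ) :
    ramanujanSum C n = ((fun m : ℕ => if (m : ℤ) ∣ n then (m : ℂ) else 0) ⍟ ↗μ) C := by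
  rcases C.eq_zero_or_pos with rfl | hC
  · simp [ramanujanSum]
  rw [ramanujanSum, sum_filter_coprime_eq_sum_divisors_moebius _ hC.ne', convolution_def]
  beta_reduce
  rw [Nat.sum_divisorsAntidiagonal' (fun m k => (if (m : ℤ) ∣ n then (m : ℂ) else 0) * (μ k : ℂ))]
  refine sum_congr rfl fun g hg => ?_
  obtain ⟨M, rfl⟩ := Nat.dvd_of_mem_divisors hg
  have hg0 : 0 < g := Nat.pos_of_mul_pos_right hC
  have hM0 : 0 < M := Nat.pos_of_mul_pos_left hC
  have hterm : ∀ t, e2 ((-(n * (g * t : ℕ)) : ℤ) / (g * M : ℕ)) =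
      (Complex.exp (2 * Real.pi * Complex.I / M) ^ (-n)) ^ t := by
    intro t
    rw [← zpow_natCast, ← zpow_mul, ← e2_intCast_div_s10]
    congr 1
    push_cast
    field_simp
  rw [sum_range_mul_filter_dvd hg0, sum_congr rfl fun t _ => hterm t,
    (Complex.isPrimitiveRoot_exp M hM0.ne').geom_sum_zpow,
    Nat.mul_div_cancel_left M hg0, mul_comm]
  simp only [Int.dvd_neg]

theorem LSeries.convolution_mul_mul_of_map_mul {R : Type*} [CommSemiring R] {χ : ℕ → R}
    (hχ : ∀ a b, χ (a * b) = χ a * χ b) (f g : ℕ → R) :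
    (χ * f) ⍟ (χ * g) = χ * (f ⍟ g) := by
  ext C
  simp only [convolution_def, Pi.mul_apply, mul_sum]
  refine sum_congr rfl fun p hp => ?_
  rw [← (Nat.mem_divisorsAntidiagonal.1 hp).1, hχ]
  ring

theorem DirichletCharacter.apply_natCast_eq_zero_of_not_coprime {N : ℕ}
    (χ : DirichletCharacter ℂ N) {k : ℕ} (hk : ¬ k.Coprime N) : χ k = 0 :=
  χ.map_nonunit (mt (ZMod.isUnit_iff_coprime k N).1 hk)

theorem DirichletCharacter.LSeries_mul_moebius_eulerProduct_hasProd {N : ℕ}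
    (χ : DirichletCharacter ℂ N) {s : ℂ} (hs : 1 < s.re) :
    HasProd (fun p : Nat.Primes => 1 - χ p * (p : ℂ) ^ (-s)) (L (↗χ * ↗μ) s) := by
  have h := (χ.LSeries_eulerProduct_hasProd hs).inv₀ (χ.LSeries_ne_zero_of_one_lt_re hs)
  simp only [inv_inv] at h
  rwa [← eq_inv_of_mul_eq_one_right (LSeries.mul_mu_eq_one χ hs)] at h

theorem DirichletCharacter.LSeries_mul_moebius_hasProd_primes_not_dvd {N : ℕ}
    (χ : DirichletCharacter ℂ N) {s : ℂ} (hs : 1 < s.re) :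
    HasProd (fun p : {p : ℕ // p.Prime ∧ ¬ p ∣ N} => 1 - χ (p : ℕ) * ((p : ℕ) : ℂ) ^ (-s))
      (L (↗χ * ↗μ) s) := by
  have hinj : Function.Injective
      (fun p : {p : ℕ // p.Prime ∧ ¬ p ∣ N} => (⟨p.1, p.2.1⟩ : Nat.Primes)) :=
    fun ⦃_ _⦄ h => Subtype.ext (Subtype.mk.inj h)
  refine (hinj.hasProd_iff fun p hp => ?_).2 (χ.LSeries_mul_moebius_eulerProduct_hasProd hs)
  have hdvd : (p : ℕ) ∣ N := by
    by_contra h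
    exact hp ⟨⟨p, p.2, h⟩, rfl⟩
  rw [χ.apply_natCast_eq_zero_of_not_coprime fun h => (p.2.coprime_iff_not_dvd.1 h) hdvd]
  simp

theorem LSeriesHasSum_of_eq_zero_of_not_dvd {f : ℕ → ℂ} {n : ℕ} (hn : n ≠ 0)
    (hf : ∀ k, ¬ k ∣ n → f k = 0) (s : ℂ) :
    LSeriesHasSum f s (∑ k ∈ n.divisors, f k / (k : ℂ) ^ s) := by
  have h : HasSum (term f s) (∑ k ∈ n.divisors, term f s k) :=
    hasSum_sum_of_ne_finset_zero fun k hk => by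
      rcases eq_or_ne k 0 with rfl | hk0
      · simp
      · rw [term_of_ne_zero hk0, hf k fun h => hk (Nat.mem_divisors.2 ⟨h, hn⟩), zero_div]
  unfold LSeriesHasSum
  convert h using 1
  exact sum_congr rfl fun k hk => (term_of_ne_zero (Nat.pos_of_mem_divisors hk).ne' f s).symm

theorem LSeriesHasSum_mul_ramanujanSum {N : ℕ} (χ : DirichletCharacter ℂ N) {n : ℕ} (hn : n ≠ 0)
    {s : ℂ} (hs : 1 < s.re) :
    LSeriesHasSum (fun C : ℕ => χ C * ramanujanSum C n) s
      ((∑ d ∈ n.divisors, χ d * (d : ℂ) ^ (1 - s)) * L (↗χ * ↗μ) s) := by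
  set a : ℕ → ℂ := ↗χ * fun m : ℕ => if (m : ℤ) ∣ (n : ℤ) then (m : ℂ) else 0
  have hconv : a ⍟ (↗χ * ↗μ) = fun C : ℕ => χ C * ramanujanSum C n := by
    rw [convolution_mul_mul_of_map_mul fun a b => by simp]
    exact congrArg _ (funext fun C => (ramanujanSum_eq_convolution C n).symm)
  have ha : LSeriesHasSum a s (∑ d ∈ n.divisors, χ d * (d : ℂ) ^ (1 - s)) := by
    have ha_dvd : ∀ k, ¬ k ∣ n → a k = 0 := fun k hk => by simp [a, Int.natCast_dvd_natCast, hk]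
    convert LSeriesHasSum_of_eq_zero_of_not_dvd hn ha_dvd s using 1
    refine sum_congr rfl fun d hd => ?_
    have hd0 : (d : ℂ) ≠ 0 := Nat.cast_ne_zero.2 (Nat.pos_of_mem_divisors hd).ne'
    simp [a, Int.natCast_dvd_natCast, Nat.dvd_of_mem_divisors hd, Complex.cpow_sub _ _ hd0,
      mul_div_assoc]
  have hb : LSeriesSummable (↗χ * ↗μ) s := χ.LSeriesSummable_mul (LSeriesSummable_moebius_iff.2 hs)
  rw [← hconv, ← ha.LSeries_eq, ← LSeries_convolution' ha.LSeriesSummable hb]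
  exact (ha.LSeriesSummable.convolution hb).LSeriesHasSum

end

theorem ramanujan_dirichlet_series_general
    (Q n : ℕ) (hn : 0 < n) (ψ : DirichletCharacter ℂ Q)
    (s : ℂ) (hs : 1 / 2 < s.re) :
    Summable (fun C : ℕ => ‖(if 1 ≤ C ∧ Nat.Coprime C Q then
        ψ (C : ZMod Q) * ramanujanSum C (n : ℤ) * (C : ℂ) ^ (-(2 : ℂ) * s) else 0)‖) ∧
    Multipliable (fun p : {p : ℕ // p.Prime ∧ ¬ p ∣ Q} =>
        1 - ψ ((p : ℕ) : ZMod Q) * ((p : ℕ) : ℂ) ^ (-(2 : ℂ) * s)) ∧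
    (∑' C : ℕ, if 1 ≤ C ∧ Nat.Coprime C Q then
        ψ (C : ZMod Q) * ramanujanSum C (n : ℤ) * (C : ℂ) ^ (-(2 : ℂ) * s) else 0) =
      (∑ δ ∈ n.divisors, if Nat.Coprime δ Q then
          ψ (δ : ZMod Q) * (δ : ℂ) ^ ((1 : ℂ) - 2 * s) else 0) *
        ∏' p : {p : ℕ // p.Prime ∧ ¬ p ∣ Q},
          (1 - ψ ((p : ℕ) : ZMod Q) * ((p : ℕ) : ℂ) ^ (-(2 : ℂ) * s)) := by
  have hs2 : 1 < (2 * s).re := by simp; linarith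
  have hsum := LSeriesHasSum_mul_ramanujanSum ψ hn.ne' hs2
  have hprod := ψ.LSeries_mul_moebius_hasProd_primes_not_dvd hs2
  have hterm : ∀ C : ℕ, (if 1 ≤ C ∧ Nat.Coprime C Q then
      ψ (C : ZMod Q) * ramanujanSum C (n : ℤ) * (C : ℂ) ^ (-(2 : ℂ) * s) else 0) =
      term (fun C : ℕ => ψ C * ramanujanSum C n) (2 * s) C := by
    intro C
    rcases C.eq_zero_or_pos with rfl | hC
    · simp
    by_cases hcop : C.Coprime Q
    · simp [hC.ne', hcop, neg_mul, Complex.cpow_neg, div_eq_mul_inv]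
    · simp [term_of_ne_zero hC.ne', hcop, ψ.apply_natCast_eq_zero_of_not_coprime hcop]
  have hdivisors : ∀ d : ℕ, (if Nat.Coprime d Q then
      ψ (d : ZMod Q) * (d : ℂ) ^ ((1 : ℂ) - 2 * s) else 0) = ψ d * (d : ℂ) ^ (1 - 2 * s) := by
    intro d
    by_cases hcop : d.Coprime Q
    · simp [hcop]
    · simp [hcop, ψ.apply_natCast_eq_zero_of_not_coprime hcop]
  simp only [hterm]
  simp only [hdivisors, neg_mul]
  exact ⟨summable_norm_iff.2 hsum.LSeriesSummable, hprod.multipliable,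
    by rw [hsum.tsum_eq, hprod.tprod_eq]⟩

/-- Evaluation of the Dirichlet series of twisted Ramanujan sums:
for `Re(s) > 1/2`,
`Σ_{(C,Q)=1} ψ(C) r_C(n) C^{-2s}
  = (Σ_{δ∣n, (δ,Q)=1} ψ(δ) δ^{1-2s}) Π_{p ∤ Q} (1 − ψ(p) p^{-2s})`,
the series converging absolutely and the product converging. -/
theorem ramanujan_dirichlet_series
    (Q n : ℕ) (hQ : 0 < Q) (hn : 0 < n) (ψ : DirichletCharacter ℂ Q)
    (s : ℂ) (hs : 1 / 2 < s.re) :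
    Summable (fun C : ℕ => ‖(if 1 ≤ C ∧ Nat.Coprime C Q then
        ψ (C : ZMod Q) * ramanujanSum C (n : ℤ) * (C : ℂ) ^ (-(2 : ℂ) * s) else 0)‖) ∧
    Multipliable (fun p : {p : ℕ // p.Prime ∧ ¬ p ∣ Q} =>
        1 - ψ ((p : ℕ) : ZMod Q) * ((p : ℕ) : ℂ) ^ (-(2 : ℂ) * s)) ∧
    (∑' C : ℕ, if 1 ≤ C ∧ Nat.Coprime C Q then
        ψ (C : ZMod Q) * ramanujanSum C (n : ℤ) * (C : ℂ) ^ (-(2 : ℂ) * s) else 0) =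
      (∑ δ ∈ n.divisors, if Nat.Coprime δ Q then
          ψ (δ : ZMod Q) * (δ : ℂ) ^ ((1 : ℂ) - 2 * s) else 0) *
        ∏' p : {p : ℕ // p.Prime ∧ ¬ p ∣ Q},
          (1 - ψ ((p : ℕ) : ZMod Q) * ((p : ℕ) : ℂ) ^ (-(2 : ℂ) * s)) :=
  ramanujan_dirichlet_series_general Q n hn ψ s hs
end

section
/- There exists an absolute constant C > 0 such that for every prime q and every integer a with q ∤ a, the function f : (ℤ/qℤ)^× → ℂ given by f(c) = e(ac/q) satisfies |‖f̂‖₁ − q| ≤ C. -/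
open scoped BigOperators

/-- The `q`-Mellin transform `f̂(χ) = φ(q)^{-1/2} Σ_{c ∈ (ℤ/qℤ)ˣ} conj(χ(c)) f(c)`. -/
noncomputable def qMellin (q : ℕ) [NeZero q] (f : (ZMod q)ˣ → ℂ)
    (χ : DirichletCharacter ℂ q) : ℂ :=
  ((q.totient : ℝ) ^ (-(1/2) : ℝ) : ℝ) * ∑ c : (ZMod q)ˣ, (starRingEnd ℂ) (χ c) * f c

/-- `‖f̂‖₁ = Σ_{χ mod q} |f̂(χ)|` (a finite sum, written as a `tsum` over the finite
type of Dirichlet characters mod `q`). -/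
noncomputable def qMellinNorm (q : ℕ) [NeZero q] (f : (ZMod q)ˣ → ℂ) : ℝ :=
  ∑' χ : DirichletCharacter ℂ q, ‖qMellin q f χ‖

theorem sum_units_starRingEnd_mul_eq_gaussSum_inv {R : Type*} [CommRing R] [Fintype R]
    [Fintype Rˣ] (χ : MulChar R ℂ) (ψ : AddChar R ℂ) :
    ∑ u : Rˣ, starRingEnd ℂ (χ u) * ψ u = gaussSum χ⁻¹ ψ :=
  Fintype.sum_of_injective _ Units.val_injective _ (fun x ↦ χ⁻¹ x * ψ x)
    (fun _ hx ↦ by rw [MulChar.map_nonunit _ fun hu ↦ hx ⟨hu.unit, rfl⟩, zero_mul])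
    (fun _ ↦ by rw [starRingEnd_apply, MulChar.star_apply'])

section FiniteField

variable {F : Type*} [Field F] [Fintype F]

theorem norm_gaussSum_of_ne_one {χ : MulChar F ℂ} (hχ : χ ≠ 1) {ψ : AddChar F ℂ} (hψ : ψ ≠ 1) :
    ‖gaussSum χ ψ‖ = √(Fintype.card F) := by
  have h := gaussSum_mul_gaussSum_eq_card hχ (AddChar.IsPrimitive.of_ne_one hψ)
  rw [← star_gaussSum_eq, ← starRingEnd_apply, Complex.mul_conj, ← Complex.ofReal_natCast,
    Complex.ofReal_inj] at h
  rw [Complex.norm_def, h]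

theorem tsum_norm_gaussSum {ψ : AddChar F ℂ} (hψ : ψ ≠ 1) :
    ∑' χ : MulChar F ℂ, ‖gaussSum χ ψ‖ = 1 + (Fintype.card F - 2) * √(Fintype.card F) := by
  classical
  have := Fintype.ofFinite (MulChar F ℂ)
  have hcard : Fintype.card (MulChar F ℂ) = Fintype.card F - 1 := by
    simpa [Nat.card_eq_fintype_card] using
      (MulChar.card_eq_card_units_of_hasEnoughRootsOfUnity F ℂ).trans (Nat.card_units F)
  have hF : 2 ≤ Fintype.card F := Fintype.one_lt_card
  rw [tsum_fintype, Fintype.sum_eq_add_sum_compl 1, gaussSum_one_left hψ, norm_neg, norm_one,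
    Finset.sum_congr rfl fun χ hχ ↦ norm_gaussSum_of_ne_one (by simpa using hχ) hψ,
    Finset.sum_const, Finset.card_compl, Finset.card_singleton, hcard, nsmul_eq_mul,
    Nat.cast_sub (by omega), Nat.cast_sub (by omega)]
  ring

theorem tsum_norm_gaussSum_inv {ψ : AddChar F ℂ} (hψ : ψ ≠ 1) :
    ∑' χ : MulChar F ℂ, ‖gaussSum χ⁻¹ ψ‖ = 1 + (Fintype.card F - 2) * √(Fintype.card F) :=
  ((Equiv.inv _).tsum_eq fun χ ↦ ‖gaussSum χ ψ‖).trans (tsum_norm_gaussSum hψ)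

end FiniteField

theorem e2_intCast_mul_val_div (q : ℕ) [NeZero q] (a : ℤ) (x : ZMod q) :
    e2 (((a * (x.val : ℤ) : ℤ) : ℝ) / q) = ZMod.stdAddChar.mulShift (a : ZMod q) x := by
  have hcast : ((a * (x.val : ℤ) : ℤ) : ZMod q) = a * x := by push_cast; rw [ZMod.natCast_zmod_val]
  rw [AddChar.mulShift_apply, ← hcast, ZMod.stdAddChar_coe, e2]
  push_cast
  ring_nf

theorem qMellinNorm_addChar {q : ℕ} [NeZero q] [Fact q.Prime] {ψ : AddChar (ZMod q) ℂ}
    (hψ : ψ ≠ 1) :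
    qMellinNorm q (fun c ↦ ψ c) = (1 + (q - 2) * √q) / √(q - 1) := by
  have htotient : ((q.totient : ℕ) : ℝ) = q - 1 := by
    rw [Nat.totient_prime Fact.out, Nat.cast_pred (NeZero.pos q)]
  have hnorm (χ : DirichletCharacter ℂ q) :
      ‖qMellin q (fun c ↦ ψ c) χ‖ = (√(q - 1))⁻¹ * ‖gaussSum χ⁻¹ ψ‖ := by
    rw [qMellin, sum_units_starRingEnd_mul_eq_gaussSum_inv, norm_mul, Complex.norm_real,
      Real.norm_of_nonneg (by positivity), htotient, Real.sqrt_eq_rpow, ← Real.rpow_neg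
      (sub_nonneg.mpr (by exact_mod_cast NeZero.one_le))]
  rw [qMellinNorm, tsum_congr hnorm, tsum_mul_left, tsum_norm_gaussSum_inv hψ, ZMod.card,
    inv_mul_eq_div]

theorem abs_one_add_mul_sqrt_div_sqrt_sub_le_two {n : ℝ} (hn : 2 ≤ n) :
    |(1 + (n - 2) * √n) / √(n - 1) - n| ≤ 2 := by
  set s := √n
  set t := √(n - 1)
  have hs2 : s ^ 2 = n := Real.sq_sqrt (by linarith)
  have ht2 : t ^ 2 = n - 1 := Real.sq_sqrt (by linarith)
  have ht1 : 1 ≤ t := Real.one_le_sqrt.mpr (by linarith)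
  have hts : t ≤ s := Real.sqrt_le_sqrt (by linarith)
  have ht : 0 < t := by linarith
  rw [abs_le, le_sub_iff_add_le, sub_le_iff_le_add, le_div_iff₀ ht, div_le_iff₀ ht]
  constructor
  · nlinarith [mul_le_mul_of_nonneg_left hts (by linarith : (0 : ℝ) ≤ n - 2)]
  · -- `(n - 2) (s - t) = (n - 2) / (s + t) ≤ t / 2`, as `n - 2 ≤ t ^ 2` and `2 t ≤ s + t`
    have hdiff : (s - t) * (s + t) = 1 := by linear_combination hs2 - ht2
    nlinarith

/-- There is an absolute constant `C > 0` such that for every prime `q` and `q ∤ a`,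
the additive-character weight `f(c) = e(ac/q)` has `‖f̂‖₁ = q + O(1)`. -/
theorem qMellinNorm_additive_character :
    ∃ C : ℝ, 0 < C ∧ ∀ (q : ℕ) [NeZero q], q.Prime → ∀ a : ℤ, ¬ ((q : ℤ) ∣ a) →
      |qMellinNorm q (fun c : (ZMod q)ˣ =>
          e2 (((a * ((c : ZMod q).val : ℤ) : ℤ) : ℝ) / q)) - q| ≤ C := by
  refine ⟨2, two_pos, fun q _ hq a ha ↦ ?_⟩
  have : Fact q.Prime := ⟨hq⟩
  have hψ : ZMod.stdAddChar.mulShift (a : ZMod q) ≠ 1 :=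
    ZMod.isPrimitive_stdAddChar q (by rwa [Ne, ZMod.intCast_zmod_eq_zero_iff_dvd])
  simp_rw [e2_intCast_mul_val_div, qMellinNorm_addChar hψ]
  exact abs_one_add_mul_sqrt_div_sqrt_sub_le_two (by exact_mod_cast hq.two_le)
end
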